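/- Let A be a commutative ring, and let f, g₁, …, g_m ∈ A be non-zero-divisors. Let M• be a cochain complex of A-modules on each term of which multiplication by f is injective. If f divides g_i for every 1 ≤ i ≤ m, then there is an isomorphism of cochain complexes of A-modules η_f(M• ⊗_A Kos_A(g₁, …, g_m)) ≅ η_f(M•) ⊗_A Kos_A(g₁/f, …, g_m/f), where g_i/f denotes the unique element of A with f·(g_i/f) = g_i. -/

import Mathlib

/-!
Décalage and Koszul complexes, after Bhatt–Morrow–Scholze (Lemma 7.9 (ii)).

A cochain complex of `A`-modules is presented as an `A`-module `M` together with a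
differential `d : M →ₗ[A] M` with `d ∘ d = 0` and an internal grading
`G : ℤ → Submodule A M` (so `Mⁱ = G i`) with `d (G i) ⊆ G (i+1)`.

The tensor product `M• ⊗_A Kos_A(g₁, …, g_m)` with the Koszul complex (the tensor product of
the two-term complexes `A →^{gᵢ} A` in cohomological degrees 0 and 1) is presented as the
module `Finset (Fin m) → M` of coefficients of the Koszul basis vectors `e_S`, with
degree-`n` graded piece `{ ξ | ξ_S ∈ M^{n - |S|} }` and total (Koszul-sign) differential
`(Dξ)_S = (-1)^{|S|}·d(ξ_S) + ∑_{i ∈ S} (-1)^{#{j ∈ S : j < i}} gᵢ·ξ_{S \ {i}}`.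

The décalage `η_f` is applied to such complexes via their localized total module, and
`η_f(M•)` is itself a cochain complex graded by the submodules `etaDeg f d G n` of `M[1/f]`,
with differential the localized differential; so `η_f(M•) ⊗_A Kos_A(g₁/f, …, g_m/f)` is
presented on `Finset (Fin m) → M[1/f]` with grading `koszulGrading (etaDeg f d G)` and
differential `koszulD (locDiff f d) (g/f)`.
-/

universe u

open LocalizedModule

section Decalage

variable {A : Type u} [CommRing A]

/-- The image of `f` in the localization `A[1/f]`, as a unit. -/
noncomputable def fUnit (f : A) : (Localization (Submonoid.powers f))ˣ :=
  (IsLocalization.map_units (Localization (Submonoid.powers f))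
    (⟨f, Submonoid.mem_powers f⟩ : Submonoid.powers f)).unit

variable (f : A) {M : Type u} [AddCommGroup M] [Module A M]

/-- Multiplication by `f ^ j` (for `j : ℤ`) on `M[1/f]`, as an `A`-linear map. -/
noncomputable def fzpow (j : ℤ) :
    LocalizedModule (Submonoid.powers f) M →ₗ[A] LocalizedModule (Submonoid.powers f) M where
  toFun α := ((fUnit f ^ j : (Localization (Submonoid.powers f))ˣ) :
      Localization (Submonoid.powers f)) • α
  map_add' a b := smul_add _ a b
  map_smul' a α := by
    simp only [RingHom.id_apply]
    rw [← algebraMap_smul (Localization (Submonoid.powers f)) a α,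
      ← algebraMap_smul (Localization (Submonoid.powers f)) a
        (((fUnit f ^ j : (Localization (Submonoid.powers f))ˣ) :
          Localization (Submonoid.powers f)) • α),
      smul_smul, smul_smul, mul_comm]

/-- The localization `d[1/f] : M[1/f] → M[1/f]` of the differential `d`. -/
noncomputable def locDiff (d : M →ₗ[A] M) :
    LocalizedModule (Submonoid.powers f) M →ₗ[A] LocalizedModule (Submonoid.powers f) M :=
  IsLocalizedModule.map (Submonoid.powers f)
    (mkLinearMap (Submonoid.powers f) M) (mkLinearMap (Submonoid.powers f) M) d

variable (d : M →ₗ[A] M) (G : ℤ → Submodule A M)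

/-- The degree-`n` term `η_f(M)ⁿ = { α ∈ fⁿ·Mⁿ : dα ∈ f^{n+1}·M^{n+1} }` of the décalage
complex, as a submodule of `M[1/f]`; here `Mⁿ = G n` is the degree-`n` graded piece. -/
noncomputable def etaDeg (n : ℤ) :
    Submodule A (LocalizedModule (Submonoid.powers f) M) :=
  (G n).map ((fzpow f n).comp (mkLinearMap (Submonoid.powers f) M)) ⊓
    ((G (n + 1)).map ((fzpow f (n + 1)).comp (mkLinearMap (Submonoid.powers f) M))).comap
      (locDiff f d)

end Decalage

section Koszul

variable {A : Type u} [CommRing A] {M : Type u} [AddCommGroup M] [Module A M] {m : ℕ}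

/-- The total differential of `M• ⊗_A Kos_A(g₁, …, g_m)`, on the module
`Finset (Fin m) → M` of coefficients of the Koszul basis vectors `e_S`:
`(Dξ)_S = (-1)^{|S|}·d(ξ_S) + ∑_{i ∈ S} (-1)^{#{j ∈ S : j < i}}·gᵢ·ξ_{S \ {i}}`. -/
noncomputable def koszulD (d : M →ₗ[A] M) (g : Fin m → A) :
    (Finset (Fin m) → M) →ₗ[A] (Finset (Fin m) → M) where
  toFun ξ S := ((-1 : A) ^ S.card) • d (ξ S) +
    ∑ i ∈ S, (((-1 : A) ^ (S.filter fun j => j < i).card) * g i) • ξ (S.erase i)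
  map_add' ξ ζ := by
    funext S
    simp only [Pi.add_apply, map_add, smul_add, Finset.sum_add_distrib]
    abel
  map_smul' a ξ := by
    funext S
    simp only [Pi.smul_apply, map_smul, RingHom.id_apply, smul_add, Finset.smul_sum,
      smul_comm a]

/-- The degree-`n` graded piece of `M• ⊗_A Kos_A(g₁, …, g_m)`:
those `ξ` with `ξ_S ∈ M^{n - |S|}` for all `S`. -/
def koszulGrading (G : ℤ → Submodule A M) (n : ℤ) : Submodule A (Finset (Fin m) → M) where
  carrier := {ξ | ∀ S : Finset (Fin m), ξ S ∈ G (n - S.card)}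
  add_mem' := fun ha hb S => (G _).add_mem (ha S) (hb S)
  zero_mem' := fun S => (G _).zero_mem
  smul_mem' := fun a ξ hξ S => (G _).smul_mem a (hξ S)

end Koszul

/-! After inverting `f`, the coefficient module of `M• ⊗ Kos(g)` becomes
`M[1/f]^{2^m}`, and rescaling the `e_S`-coefficient by `f^{-|S|}` conjugates the Koszul
differential for `g` into the one for `h = g/f`: the term `gᵢ·ξ_{S∖i}` passes from a coefficient
of size `|S| - 1` to one of size `|S|`, which absorbs the factor `f` of `gᵢ = f·hᵢ`. The same
rescaling carries `fⁿ·(M• ⊗ Kos)ⁿ` onto the family of the `f^{n-|S|}·M^{n-|S|}`, and the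
condition on the differential defining `η_f` can then be checked coefficientwise, because the
Koszul part of the differential of an element of `fⁿ·(M• ⊗ Kos)ⁿ` automatically lies in the
right piece. -/


section KoszulComplex

variable {A : Type u} [CommRing A] {N : Type u} [AddCommGroup N] [Module A N] {m : ℕ}

lemma koszulD_apply (δ : N →ₗ[A] N) (g : Fin m → A) (ξ : Finset (Fin m) → N)
    (S : Finset (Fin m)) :
    koszulD δ g ξ S = ((-1 : A) ^ S.card) • δ (ξ S) +
      ∑ i ∈ S, (((-1 : A) ^ (S.filter fun j => j < i).card) * g i) • ξ (S.erase i) :=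
  rfl

lemma koszulD_naturality {N' : Type u} [AddCommGroup N'] [Module A N'] (φ : N →ₗ[A] N')
    {δ : N →ₗ[A] N} {δ' : N' →ₗ[A] N'} (hφ : ∀ x, φ (δ x) = δ' (φ x)) (g : Fin m → A)
    (ξ : Finset (Fin m) → N) :
    (fun S => φ (koszulD δ g ξ S)) = koszulD δ' g fun S => φ (ξ S) := by
  funext S
  simp only [koszulD_apply, map_add, map_smul, map_sum, hφ]

lemma koszul_sum_mem_koszulGrading {P : ℤ → Submodule A N} {n : ℤ} {ξ : Finset (Fin m) → N}
    (hξ : ξ ∈ koszulGrading P n) (g : Fin m → A) (S : Finset (Fin m)) :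
    ∑ i ∈ S, (((-1 : A) ^ (S.filter fun j => j < i).card) * g i) • ξ (S.erase i) ∈
      P (n + 1 - S.card) := by
  refine Submodule.sum_mem _ fun i hi => Submodule.smul_mem _ _ ?_
  have hcard : n - ((S.erase i).card : ℤ) = n + 1 - S.card := by
    rw [Finset.card_erase_of_mem hi, Nat.cast_sub (Finset.card_pos.mpr ⟨i, hi⟩)]
    ring
  exact hcard ▸ hξ (S.erase i)

lemma koszulD_apply_mem_iff {P : ℤ → Submodule A N} {n : ℤ} {ξ : Finset (Fin m) → N}
    (hξ : ξ ∈ koszulGrading P n) (δ : N →ₗ[A] N) (g : Fin m → A) (S : Finset (Fin m)) :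
    koszulD δ g ξ S ∈ P (n + 1 - S.card) ↔ δ (ξ S) ∈ P (n + 1 - S.card) := by
  rw [koszulD_apply, Submodule.add_mem_iff_left _ (koszul_sum_mem_koszulGrading hξ g S),
    Submodule.smul_mem_iff_of_isUnit _ ((isUnit_neg_one).pow _)]

lemma koszulD_mem_koszulGrading {P : ℤ → Submodule A N} {δ : N →ₗ[A] N}
    (hδ : ∀ k, ∀ x ∈ P k, δ x ∈ P (k + 1)) (g : Fin m → A) {n : ℤ} {ξ : Finset (Fin m) → N}
    (hξ : ξ ∈ koszulGrading P n) : koszulD δ g ξ ∈ koszulGrading P (n + 1) := fun S => by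
  rw [koszulD_apply_mem_iff hξ]
  simpa only [sub_add_eq_add_sub] using hδ _ _ (hξ S)

lemma mem_koszulGrading_and_koszulD_mem_iff (P : ℤ → Submodule A N) (δ : N →ₗ[A] N)
    (g : Fin m → A) (n : ℤ) (ξ : Finset (Fin m) → N) :
    ξ ∈ koszulGrading P n ∧ koszulD δ g ξ ∈ koszulGrading P (n + 1) ↔
      ξ ∈ koszulGrading (fun k => P k ⊓ (P (k + 1)).comap δ) n := by
  constructor
  · rintro ⟨hξ, hdξ⟩ S
    refine ⟨hξ S, ?_⟩
    simpa only [sub_add_eq_add_sub, SetLike.mem_coe, Submodule.mem_comap] using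
      (koszulD_apply_mem_iff hξ δ g S).1 (hdξ S)
  · intro hξ
    have hξ' : ξ ∈ koszulGrading P n := fun S => (hξ S).1
    refine ⟨hξ', fun S => (koszulD_apply_mem_iff hξ' δ g S).2 ?_⟩
    simpa only [sub_add_eq_add_sub, SetLike.mem_coe, Submodule.mem_comap] using (hξ S).2

end KoszulComplex

section Localization

variable {A : Type u} [CommRing A] (f : A) {M : Type u} [AddCommGroup M] [Module A M]

local notation "Sf" => Submonoid.powers f

lemma fzpow_apply (j : ℤ) (x : LocalizedModule Sf M) :
    fzpow f j x = ((fUnit f ^ j : (Localization Sf)ˣ) : Localization Sf) • x :=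
  rfl

lemma fzpow_fzpow (i j : ℤ) (x : LocalizedModule Sf M) :
    fzpow f i (fzpow f j x) = fzpow f (i + j) x := by
  rw [fzpow_apply, fzpow_apply, fzpow_apply, smul_smul, ← Units.val_mul, ← zpow_add]

lemma fzpow_zero (x : LocalizedModule Sf M) : fzpow f 0 x = x := by
  rw [fzpow_apply, zpow_zero, Units.val_one, one_smul]

lemma smul_fzpow (j : ℤ) (x : LocalizedModule Sf M) : f • fzpow f j x = fzpow f (j + 1) x := by
  rw [← algebraMap_smul (Localization Sf) f, fzpow_apply, fzpow_apply, smul_smul,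
    zpow_add_one, Units.val_mul, mul_comm]
  rfl

lemma map_fzpow {N : Type u} [AddCommGroup N] [Module A N]
    (φ : LocalizedModule Sf M →ₗ[A] LocalizedModule Sf N) (j : ℤ) (x : LocalizedModule Sf M) :
    φ (fzpow f j x) = fzpow f j (φ x) :=
  φ.map_smul_of_tower _ x

noncomputable def fzpowEquiv (j : ℤ) : LocalizedModule Sf M ≃ₗ[A] LocalizedModule Sf M :=
  .ofLinearMap (fzpow f j) (fzpow f (-j))
    (LinearMap.ext fun x => by simp [fzpow_fzpow, fzpow_zero])
    (LinearMap.ext fun x => by simp [fzpow_fzpow, fzpow_zero])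

lemma locDiff_mk (d : M →ₗ[A] M) (x : M) :
    locDiff f d (mk x 1) = mk (d x) 1 :=
  IsLocalizedModule.map_apply Sf (mkLinearMap Sf M) (mkLinearMap Sf M) d x

lemma locDiff_locDiff {d : M →ₗ[A] M} (hdd : d.comp d = 0) (x : LocalizedModule Sf M) :
    locDiff f d (locDiff f d x) = 0 := by
  have hloc : locDiff f d ∘ₗ locDiff f d = 0 := by
    rw [locDiff, ← IsLocalizedModule.map_comp', hdd, map_zero]
  exact LinearMap.congr_fun hloc x

end Localization

section KoszulLocalization

variable {A : Type u} [CommRing A] (f : A)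

local notation "Sf" => Submonoid.powers f

noncomputable def locPiEquiv (M : Type u) [AddCommGroup M] [Module A M] (ι : Type*) [Finite ι] :
    LocalizedModule Sf (ι → M) ≃ₗ[A] (ι → LocalizedModule Sf M) :=
  IsLocalizedModule.iso Sf (LinearMap.pi fun i => mkLinearMap Sf M ∘ₗ LinearMap.proj i)

variable {M : Type u} [AddCommGroup M] [Module A M] {m : ℕ}

lemma locPiEquiv_mk {ι : Type*} [Finite ι] (ξ : ι → M) :
    locPiEquiv f M ι (mk ξ 1) = fun i => mk (ξ i) 1 :=
  IsLocalizedModule.iso_mk_one _ _ ξ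

lemma locPiEquiv_locDiff_koszulD (d : M →ₗ[A] M) (g : Fin m → A)
    (x : LocalizedModule Sf (Finset (Fin m) → M)) :
    locPiEquiv f M (Finset (Fin m)) (locDiff f (koszulD d g) x) =
      koszulD (locDiff f d) g (locPiEquiv f M (Finset (Fin m)) x) := by
  have key : (locPiEquiv f M (Finset (Fin m))).toLinearMap ∘ₗ locDiff f (koszulD d g) =
      koszulD (locDiff f d) g ∘ₗ (locPiEquiv f M (Finset (Fin m))).toLinearMap := by
    refine IsLocalizedModule.linearMap_ext Sf (mkLinearMap Sf _)
      (LinearMap.pi fun i => mkLinearMap Sf M ∘ₗ LinearMap.proj i) ?_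
    refine LinearMap.ext fun ξ => ?_
    simp only [LinearMap.comp_apply, LinearEquiv.coe_coe, mkLinearMap_apply, locDiff_mk,
      locPiEquiv_mk]
    exact koszulD_naturality (mkLinearMap Sf M) (fun x => (locDiff_mk f d x).symm) g ξ
  exact LinearMap.congr_fun key x

end KoszulLocalization

section Twist

variable {A : Type u} [CommRing A] (f : A)

local notation "Sf" => Submonoid.powers f

noncomputable def koszulTwist (M : Type u) [AddCommGroup M] [Module A M] (m : ℕ) :
    (Finset (Fin m) → LocalizedModule Sf M) ≃ₗ[A] (Finset (Fin m) → LocalizedModule Sf M) :=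
  LinearEquiv.piCongrRight fun S => fzpowEquiv f (-(S.card : ℤ))

variable {M : Type u} [AddCommGroup M] [Module A M] {m : ℕ}

lemma koszulTwist_apply (y : Finset (Fin m) → LocalizedModule Sf M) (S : Finset (Fin m)) :
    koszulTwist f M m y S = fzpow f (-(S.card : ℤ)) (y S) :=
  rfl

lemma koszulTwist_koszulD (δ : LocalizedModule Sf M →ₗ[A] LocalizedModule Sf M)
    {g h : Fin m → A} (hfh : ∀ i, f * h i = g i) (y : Finset (Fin m) → LocalizedModule Sf M) :
    koszulTwist f M m (koszulD δ g y) = koszulD δ h (koszulTwist f M m y) := by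
  funext S
  simp only [koszulTwist_apply, koszulD_apply, map_add, map_smul, map_sum, map_fzpow]
  congr 1
  refine Finset.sum_congr rfl fun i hi => ?_
  have hcard : -(((S.erase i).card : ℕ) : ℤ) = -(S.card : ℤ) + 1 := by
    rw [Finset.card_erase_of_mem hi, Nat.cast_sub (Finset.card_pos.mpr ⟨i, hi⟩)]
    ring
  rw [← hfh i, mul_left_comm, mul_smul, smul_comm f, smul_fzpow, hcard]

end Twist

section KoszulDecalage

variable {A : Type u} [CommRing A] (f : A)

local notation "Sf" => Submonoid.powers f

noncomputable def koszulLocEquiv (M : Type u) [AddCommGroup M] [Module A M] (m : ℕ) :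
    LocalizedModule Sf (Finset (Fin m) → M) ≃ₗ[A] (Finset (Fin m) → LocalizedModule Sf M) :=
  (locPiEquiv f M _).trans (koszulTwist f M m)

variable {M : Type u} [AddCommGroup M] [Module A M] {m : ℕ}

lemma koszulLocEquiv_locDiff_koszulD (d : M →ₗ[A] M) {g h : Fin m → A}
    (hfh : ∀ i, f * h i = g i) (x : LocalizedModule Sf (Finset (Fin m) → M)) :
    koszulLocEquiv f M m (locDiff f (koszulD d g) x) =
      koszulD (locDiff f d) h (koszulLocEquiv f M m x) := by
  rw [koszulLocEquiv, LinearEquiv.trans_apply, LinearEquiv.trans_apply,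
    locPiEquiv_locDiff_koszulD, koszulTwist_koszulD f _ hfh]

lemma koszulLocEquiv_fzpow_mk (n : ℤ) (ξ : Finset (Fin m) → M) (S : Finset (Fin m)) :
    koszulLocEquiv f M m (fzpow f n (mk ξ 1)) S = fzpow f (n - S.card) (mk (ξ S) 1) := by
  have hpi := (locPiEquiv f M (Finset (Fin m))).toLinearMap.map_smul_of_tower
    ((fUnit f ^ n : (Localization Sf)ˣ) : Localization Sf) (mk ξ 1)
  rw [LinearEquiv.coe_coe, locPiEquiv_mk] at hpi
  rw [koszulLocEquiv, LinearEquiv.trans_apply, fzpow_apply, hpi, koszulTwist_apply,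
    Pi.smul_apply, ← fzpow_apply, fzpow_fzpow, neg_add_eq_sub]

/-- The submodule `fⁿ·Mⁿ` of `M[1/f]`. -/
noncomputable def scaledGrading (G : ℤ → Submodule A M) (n : ℤ) :
    Submodule A (LocalizedModule Sf M) :=
  (G n).map ((fzpow f n).comp (mkLinearMap Sf M))

lemma etaDeg_eq (d : M →ₗ[A] M) (G : ℤ → Submodule A M) (n : ℤ) :
    etaDeg f d G n = scaledGrading f G n ⊓ (scaledGrading f G (n + 1)).comap (locDiff f d) :=
  rfl

lemma mem_scaledGrading_koszulGrading_iff (G : ℤ → Submodule A M) (n : ℤ)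
    (x : LocalizedModule Sf (Finset (Fin m) → M)) :
    x ∈ scaledGrading f (koszulGrading G) n ↔
      koszulLocEquiv f M m x ∈ koszulGrading (scaledGrading f G) n := by
  constructor
  · rintro ⟨ξ, hξ, rfl⟩ S
    exact ⟨ξ S, hξ S, (koszulLocEquiv_fzpow_mk f n ξ S).symm⟩
  · intro hx
    choose ξ hξ hξx using hx
    refine ⟨ξ, hξ, (koszulLocEquiv f M m).injective (funext fun S => ?_)⟩
    exact (koszulLocEquiv_fzpow_mk f n ξ S).trans (hξx S)

lemma mem_etaDeg_koszul_iff (d : M →ₗ[A] M) (G : ℤ → Submodule A M) {g h : Fin m → A}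
    (hfh : ∀ i, f * h i = g i) (n : ℤ) (x : LocalizedModule Sf (Finset (Fin m) → M)) :
    x ∈ etaDeg f (koszulD d g) (koszulGrading G) n ↔
      koszulLocEquiv f M m x ∈ koszulGrading (etaDeg f d G) n := by
  rw [etaDeg_eq, Submodule.mem_inf, Submodule.mem_comap, mem_scaledGrading_koszulGrading_iff,
    mem_scaledGrading_koszulGrading_iff, koszulLocEquiv_locDiff_koszulD f d hfh]
  exact mem_koszulGrading_and_koszulD_mem_iff _ _ _ _ _

lemma locDiff_mem_etaDeg {d : M →ₗ[A] M} (hdd : d.comp d = 0) (G : ℤ → Submodule A M) {k : ℤ}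
    {x : LocalizedModule Sf M} (hx : x ∈ etaDeg f d G k) : locDiff f d x ∈ etaDeg f d G (k + 1) :=
  ⟨hx.2, Submodule.mem_comap.2 (by rw [locDiff_locDiff f hdd]; exact zero_mem _)⟩

lemma map_etaDeg_koszul (d : M →ₗ[A] M) (G : ℤ → Submodule A M) {g h : Fin m → A}
    (hfh : ∀ i, f * h i = g i) (n : ℤ) :
    (etaDeg f (koszulD d g) (koszulGrading G) n).map (koszulLocEquiv f M m).toLinearMap =
      koszulGrading (etaDeg f d G) n := by
  ext y
  rw [Submodule.map_equiv_eq_comap_symm, Submodule.mem_comap, mem_etaDeg_koszul_iff f d G hfh,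
    LinearEquiv.coe_coe, LinearEquiv.apply_symm_apply]

end KoszulDecalage

theorem eta_koszul_iso_general
    {A : Type u} [CommRing A] (f : A)
    {m : ℕ} (g : Fin m → A)
    (h : Fin m → A) (hfh : ∀ i : Fin m, f * h i = g i)
    {M : Type u} [AddCommGroup M] [Module A M]
    (d : M →ₗ[A] M) (G : ℤ → Submodule A M)
    (hdd : d.comp d = 0) :
    ∃ (hL : ∀ n : ℤ, ∀ α ∈ etaDeg f (koszulD d g) (koszulGrading G) n,
        locDiff f (koszulD d g) α ∈ etaDeg f (koszulD d g) (koszulGrading G) (n + 1))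
      (hR : ∀ n : ℤ, ∀ ξ ∈ koszulGrading (m := m) (etaDeg f d G) n,
        koszulD (locDiff f d) h ξ ∈ koszulGrading (etaDeg f d G) (n + 1))
      (Φ : ∀ n : ℤ, ↥(etaDeg f (koszulD d g) (koszulGrading G) n) ≃ₗ[A]
        ↥(koszulGrading (m := m) (etaDeg f d G) n)),
      ∀ (n : ℤ) (α : ↥(etaDeg f (koszulD d g) (koszulGrading G) n)),
        ((Φ (n + 1) ⟨locDiff f (koszulD d g) (α : _), hL n α α.2⟩ : _) :
            Finset (Fin m) → LocalizedModule (Submonoid.powers f) M) =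
          koszulD (locDiff f d) h ((Φ n α : _) :
            Finset (Fin m) → LocalizedModule (Submonoid.powers f) M) := by
  have hR : ∀ n : ℤ, ∀ ξ ∈ koszulGrading (m := m) (etaDeg f d G) n,
      koszulD (locDiff f d) h ξ ∈ koszulGrading (etaDeg f d G) (n + 1) := fun _ _ =>
    koszulD_mem_koszulGrading (P := etaDeg f d G) (fun _ _ => locDiff_mem_etaDeg f hdd G) h
  have hL : ∀ n : ℤ, ∀ α ∈ etaDeg f (koszulD d g) (koszulGrading G) n,
      locDiff f (koszulD d g) α ∈ etaDeg f (koszulD d g) (koszulGrading G) (n + 1) := by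
    intro n α hα
    rw [mem_etaDeg_koszul_iff f d G hfh, koszulLocEquiv_locDiff_koszulD f d hfh]
    exact hR n _ ((mem_etaDeg_koszul_iff f d G hfh n α).1 hα)
  refine ⟨hL, hR, fun n => (koszulLocEquiv f M m).ofSubmodules _ _ (map_etaDeg_koszul f d G hfh n),
    fun n α => ?_⟩
  rw [LinearEquiv.ofSubmodules_apply, LinearEquiv.ofSubmodules_apply]
  exact koszulLocEquiv_locDiff_koszulD f d hfh α

/-- **Bhatt–Morrow–Scholze, Lemma 7.9 (ii).** Let `A` be a commutative ring and let
`f, g₁, …, g_m ∈ A` be non-zero-divisors with `f ∣ gᵢ` for all `i`, say `gᵢ = f·hᵢ`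
(`hᵢ = gᵢ/f` is unique since `f` is a non-zero-divisor). Let `M•` be an `f`-torsion-free
cochain complex of `A`-modules (presented as a graded module `(M, G)` with differential `d`).
Then there is an isomorphism of cochain complexes of `A`-modules
`η_f(M• ⊗_A Kos_A(g₁, …, g_m)) ≅ η_f(M•) ⊗_A Kos_A(g₁/f, …, g_m/f)`:
both sides are subcomplexes (with degreewise pieces `etaDeg`/`koszulGrading (etaDeg ...)`
preserved by the respective differentials), and there are degreewise `A`-linear isomorphisms
commuting with the differentials. -/
theorem eta_koszul_iso
    {A : Type u} [CommRing A] (f : A) (hf : ∀ a : A, f * a = 0 → a = 0)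
    {m : ℕ} (g : Fin m → A) (hg : ∀ i : Fin m, ∀ a : A, g i * a = 0 → a = 0)
    (h : Fin m → A) (hfh : ∀ i : Fin m, f * h i = g i)
    {M : Type u} [AddCommGroup M] [Module A M]
    (d : M →ₗ[A] M) (G : ℤ → Submodule A M)
    (hG : DirectSum.IsInternal G)
    (hdG : ∀ n : ℤ, (G n).map d ≤ G (n + 1))
    (hdd : d.comp d = 0)
    (htf : ∀ x : M, f • x = 0 → x = 0) :
    ∃ (hL : ∀ n : ℤ, ∀ α ∈ etaDeg f (koszulD d g) (koszulGrading G) n,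
        locDiff f (koszulD d g) α ∈ etaDeg f (koszulD d g) (koszulGrading G) (n + 1))
      (hR : ∀ n : ℤ, ∀ ξ ∈ koszulGrading (m := m) (etaDeg f d G) n,
        koszulD (locDiff f d) h ξ ∈ koszulGrading (etaDeg f d G) (n + 1))
      (Φ : ∀ n : ℤ, ↥(etaDeg f (koszulD d g) (koszulGrading G) n) ≃ₗ[A]
        ↥(koszulGrading (m := m) (etaDeg f d G) n)),
      ∀ (n : ℤ) (α : ↥(etaDeg f (koszulD d g) (koszulGrading G) n)),
        ((Φ (n + 1) ⟨locDiff f (koszulD d g) (α : _), hL n α α.2⟩ : _) :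
            Finset (Fin m) → LocalizedModule (Submonoid.powers f) M) =
          koszulD (locDiff f d) h ((Φ n α : _) :
            Finset (Fin m) → LocalizedModule (Submonoid.powers f) M) :=
  eta_koszul_iso_general f g h hfh d G hdd
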